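/- arXiv:math/0501548 — 3 statements merged into one kernel-verified Lean document; each statement's English description precedes it below -/
import Mathlib

section
/- In the Euclidean plane ℝ², let ξ*, η* be points with ‖ξ*‖ ≥ ‖η*‖, let t ≥ 0 with t ≤ ‖ξ*‖. Let p_t(ξ*) be the point at distance t from the origin on the segment [0, ξ*], and let p_t(η*) be the point at distance min(t, ‖η*‖) from the origin on the segment [0, η*]. Then ‖p_t(ξ*) − p_t(η*)‖ ≤ ‖ξ* − η*‖. -/
open RealInnerProductSpace


/-- Radial retraction toward the origin at equal arc-length parameters does not
increase distances in the Euclidean plane: if `‖η‖ ≤ ‖ξ‖` and `0 ≤ t ≤ ‖ξ‖`,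
then the point at distance `t` from `0` on `[0, ξ]` and the point at distance
`min t ‖η‖` from `0` on `[0, η]` are at distance at most `‖ξ - η‖`. -/
theorem euclidean_radial_retraction_nonexpansive
    (ξ η : EuclideanSpace ℝ (Fin 2)) (t : ℝ) (ht : 0 ≤ t)
    (hle : ‖η‖ ≤ ‖ξ‖) (htξ : t ≤ ‖ξ‖) :
    ‖(t / ‖ξ‖) • ξ - (min t ‖η‖ / ‖η‖) • η‖ ≤ ‖ξ - η‖ := by
  rcases eq_or_lt_of_le (norm_nonneg η) with h0 | hbpos
  · have hη : η = 0 := norm_eq_zero.mp h0.symm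
    subst hη
    rcases eq_or_ne ξ 0 with hξ | hξ
    · subst hξ; simp
    · have ha : 0 < ‖ξ‖ := norm_pos_iff.mpr hξ
      have hnorm : ‖(t / ‖ξ‖) • ξ‖ = t := by
        rw [norm_smul, Real.norm_eq_abs, abs_of_nonneg (div_nonneg ht ha.le),
          div_mul_cancel₀ _ ha.ne']
      simp only [norm_zero, min_eq_right ht, smul_zero, sub_zero]
      rw [hnorm]; exact htξ
  · have hapos : 0 < ‖ξ‖ := lt_of_lt_of_le hbpos hle
    set a := ‖ξ‖ with ha
    set b := ‖η‖ with hb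
    set s := min t b with hs
    have hs0 : 0 ≤ s := le_min ht hbpos.le
    have hst : s ≤ t := min_le_left _ _
    have hsb : s ≤ b := min_le_right _ _
    have hts : t - s ≤ a - b := by
      rcases le_total t b with h | h
      · rw [hs, min_eq_left h]; linarith
      · rw [hs, min_eq_right h]; linarith
    have hc : ⟪ξ, η⟫ ≤ a * b := real_inner_le_norm ξ η
    rw [← Real.sqrt_sq (norm_nonneg ((t / a) • ξ - (s / b) • η)),
        ← Real.sqrt_sq (norm_nonneg (ξ - η))]
    apply Real.sqrt_le_sqrt
    rw [norm_sub_sq_real, norm_sub_sq_real, real_inner_smul_left,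
      real_inner_smul_right, norm_smul, norm_smul, Real.norm_eq_abs,
      Real.norm_eq_abs, abs_of_nonneg (div_nonneg ht hapos.le),
      abs_of_nonneg (div_nonneg hs0 hbpos.le), div_mul_cancel₀ _ hapos.ne',
      div_mul_cancel₀ _ hbpos.ne']
    have key : (t / a) * (s / b * ⟪ξ, η⟫) = t * s * ⟪ξ, η⟫ / (a * b) := by
      field_simp
    rw [key]
    set c := ⟪ξ, η⟫ with hcdef
    have hab : (0:ℝ) < a * b := mul_pos hapos hbpos
    have hX : t * s * c / (a * b) * (a * b) = t * s * c :=
      div_mul_cancel₀ _ hab.ne'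
    have h1 : (a * b - c) * (a * b - t * s) ≥ 0 := by
      apply mul_nonneg (sub_nonneg.mpr hc)
      have : t * s ≤ a * b := mul_le_mul htξ hsb hs0 (norm_nonneg _)
      linarith
    have h2 : (t - s) ^ 2 ≤ (a - b) ^ 2 := by
      apply sq_le_sq' <;> nlinarith
    nlinarith [hX, h1, h2, hab, mul_pos hapos hbpos]
end

section
/- Let A be a finite-dimensional real inner product space, Φ ⊆ A* a finite set of linear functionals (roots), Δ ⊆ Φ a simple system, and let A₊ = {x ∈ A : α(x) ≥ 0 for all α ∈ Δ} be the corresponding closed Weyl chamber. Suppose every element of Φ is either non-negative or non-positive on A₊ (i.e. Φ = Φ⁺ ∪ (−Φ⁺) with Φ⁺ non-negative on A₊). For ξ ∈ A₊, let the closure clos({0, ξ}) be the intersection of all half-spaces of the form {x : α₀(x) + γ ≥ 0} with α₀ ∈ Φ and γ ∈ ℝ that contain both 0 and ξ. Then clos({0, ξ}) = A₊ ∩ (ξ − A₊), provided the half-spaces {α ≥ 0} for α ∈ Φ and {x : α(ξ − x) ≥ 0} for α ∈ Φ are all among the admissible half-spaces. -/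
/-- In an apartment `A` with root system `Φ`, simple system `Δ ⊆ Φ` and
closed Weyl chamber `A₊ = {x | ∀ α ∈ Δ, α x ≥ 0}`, assuming every root has a
sign on `A₊` and `Φ` is symmetric (so that the relevant walls are affine
roots), the closure of `{0, ξ}` — the intersection of all half-spaces
`{x | α₀ x + γ ≥ 0}` (with `α₀ ∈ Φ`, `γ ∈ ℝ`) containing `0` and `ξ` —
equals `A₊ ∩ (ξ - A₊)` for every `ξ ∈ A₊`. -/
theorem closure_of_two_points_in_apartment
    {A : Type*} [NormedAddCommGroup A] [InnerProductSpace ℝ A] [FiniteDimensional ℝ A]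
    (Φ : Set (A →ₗ[ℝ] ℝ)) (hΦfin : Φ.Finite)
    (Δ : Set (A →ₗ[ℝ] ℝ)) (hΔΦ : Δ ⊆ Φ)
    (hneg : ∀ α ∈ Φ, -α ∈ Φ)
    (Aplus : Set A) (hAplus : Aplus = {x | ∀ α ∈ Δ, 0 ≤ α x})
    (hsign : ∀ α ∈ Φ, (∀ x ∈ Aplus, 0 ≤ α x) ∨ (∀ x ∈ Aplus, α x ≤ 0))
    (ξ : A) (hξ : ξ ∈ Aplus) :
    {x : A | ∀ α ∈ Φ, ∀ γ : ℝ, 0 ≤ α 0 + γ → 0 ≤ α ξ + γ → 0 ≤ α x + γ}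
      = Aplus ∩ {x : A | ξ - x ∈ Aplus} := by
  ext x
  constructor
  · intro hx
    constructor
    · rw [hAplus]
      intro α hα
      have := hx α (hΔΦ hα) 0 (by simp) (by
        have : 0 ≤ α ξ := by rw [hAplus] at hξ; exact hξ α hα
        simpa using this)
      simpa using this
    · rw [hAplus]
      intro α hα
      have hξα : 0 ≤ α ξ := by rw [hAplus] at hξ; exact hξ α hα
      have := hx (-α) (hneg α (hΔΦ hα)) (α ξ) (by simpa using hξα) (by simp)
      simp only [LinearMap.neg_apply, map_sub] at this ⊢
      linarith
  · rintro ⟨hx1, hx2⟩ α hα γ h0 hξγ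
    simp only [map_zero, zero_add] at h0
    rcases hsign α hα with h | h
    · have := h x hx1
      linarith
    · have := h (ξ - x) hx2
      simp only [map_sub] at this
      linarith
end

section
/- Let G be a group, H ≤ G a subgroup, X = G/H, and for a finite subset F ⊆ X define x ∼_F y iff x^{-1}y ∈ HFH (viewing x^{-1}y ∈ H\G/H and HFH ⊆ H\G/H). Then a subset S ⊆ X_n = {(x₀,…,x_n) ∈ X^{n+1} : consecutive entries distinct} is controlled (i.e., there is a finite F with x_i ∼_F x_j for all tuples in S and all i,j) if and only if S is G-finite, i.e., S ⊆ G·F' for some finite subset F' ⊆ X_n, where G acts diagonally. -/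
/-- Let `G` be a group, `H ≤ G`, `X = G/H`, and suppose each double coset
`HgH` consists of finitely many left cosets (the analogue of `H` compact open).
For a finite `F ⊆ X` write `x ∼_F y` iff `x⁻¹y ∈ HFH`.  A set `S` of tuples in
`X_{n+1}` is controlled (all entries pairwise `∼_F`-close for one finite `F`)
if and only if it is `G`-finite, i.e. contained in `G · F'` (diagonal action)
for a finite set `F'` of tuples. -/
theorem controlled_iff_Gfinite
    {G : Type*} [Group G] (H : Subgroup G) (n : ℕ)
    (hfin : ∀ g : G, {y : G ⧸ H | ∃ h ∈ H, y = ((h * g : G) : G ⧸ H)}.Finite)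
    (S : Set (Fin (n + 1) → G ⧸ H)) :
    (∃ F : Set (G ⧸ H), F.Finite ∧ ∀ x ∈ S, ∀ i j : Fin (n + 1),
      ∃ g g' fr : G, ((g : G ⧸ H) = x i) ∧ ((g' : G ⧸ H) = x j) ∧
        ((fr : G ⧸ H) ∈ F) ∧ ∃ h ∈ H, ∃ h' ∈ H, g⁻¹ * g' = h * fr * h')
    ↔ (∃ F' : Set (Fin (n + 1) → G ⧸ H), F'.Finite ∧
      ∀ x ∈ S, ∃ g : G, ∃ y ∈ F', x = fun i => g • y i) := by
  constructor
  · rintro ⟨F, hF, hcl⟩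
    set K : Set (G ⧸ H) :=
      ⋃ f ∈ F, {y : G ⧸ H | ∃ h ∈ H, y = ((h * f.out : G) : G ⧸ H)} with hKdef
    have hK : K.Finite := hF.biUnion fun f _ => hfin f.out
    refine ⟨Set.pi Set.univ (fun _ : Fin (n + 1) => K),
      Set.Finite.pi (fun _ => hK), ?_⟩
    intro x hx
    obtain ⟨g, _, _, hg0, -, -, -⟩ := hcl x hx 0 0
    refine ⟨g, fun i => g⁻¹ • x i, ?_, ?_⟩
    · intro i _
      obtain ⟨a, b, fr, ha, hb, hfr, h, hH, h', hH', heq⟩ := hcl x hx 0 i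
      -- g and a represent the same coset
      have h0 : g⁻¹ * a ∈ H := QuotientGroup.eq.mp (hg0.trans ha.symm)
      -- fr and (↑fr).out represent the same coset
      have h2 : ((fr : G ⧸ H)).out⁻¹ * fr ∈ H :=
        QuotientGroup.eq.mp (QuotientGroup.out_eq' (fr : G ⧸ H))
      have key : g⁻¹ * b
          = ((g⁻¹ * a) * h * ((fr : G ⧸ H)).out)
            * (((fr : G ⧸ H)).out⁻¹ * fr * h') := by
        have : a⁻¹ * b = h * fr * h' := heq
        calc g⁻¹ * b = (g⁻¹ * a) * (a⁻¹ * b) := by group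
          _ = (g⁻¹ * a) * (h * fr * h') := by rw [this]
          _ = _ := by group
      show g⁻¹ • x i ∈ K
      have hxi : g⁻¹ • x i = ((g⁻¹ * b : G) : G ⧸ H) := by rw [← hb]; rfl
      have : g⁻¹ • x i = ((((g⁻¹ * a) * h) * ((fr : G ⧸ H)).out : G) : G ⧸ H) := by
        rw [hxi, key]
        exact QuotientGroup.mk_mul_of_mem _ (H.mul_mem h2 hH')
      rw [hKdef]
      refine Set.mem_biUnion hfr ⟨(g⁻¹ * a) * h, H.mul_mem h0 hH, this⟩
    · funext i
      simp [smul_smul]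
  · rintro ⟨F', hF', hS⟩
    refine ⟨⋃ y ∈ F', ⋃ i : Fin (n + 1), ⋃ j : Fin (n + 1),
      {(((y i).out⁻¹ * (y j).out : G) : G ⧸ H)},
      hF'.biUnion fun y _ => Set.finite_iUnion fun i => Set.finite_iUnion
        fun j => Set.finite_singleton _, ?_⟩
    intro x hx i j
    obtain ⟨g, y, hyF, hxy⟩ := hS x hx
    refine ⟨g * (y i).out, g * (y j).out, (y i).out⁻¹ * (y j).out, ?_, ?_, ?_,
      1, H.one_mem, 1, H.one_mem, by group⟩
    · show ((g * (y i).out : G) : G ⧸ H) = x i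
      rw [hxy]
      show _ = g • y i
      conv_rhs => rw [← QuotientGroup.out_eq' (y i)]
      rfl
    · show ((g * (y j).out : G) : G ⧸ H) = x j
      rw [hxy]
      show _ = g • y j
      conv_rhs => rw [← QuotientGroup.out_eq' (y j)]
      rfl
    · exact Set.mem_biUnion hyF (Set.mem_iUnion.2 ⟨i, Set.mem_iUnion.2 ⟨j, rfl⟩⟩)
end
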